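/- arXiv:2005.01257 — 2 statements merged into one kernel-verified Lean document; each statement's English description precedes it below -/
import Mathlib

section
/- Let γ > 0, ρ ∈ C^∞([0,∞);ℝ) with 0 ≤ ρ'(t) < γ^{-1} tan(π/8) for all t ≥ 0 and ρ(0) = 0, let ψ(ξ) = |ξ|^{-1}ρ(|ξ|)ξ, φ_θ(ξ) = ξ + θψ(ξ), and D_γ = {θ ∈ ℂ : |Re θ| + |Im θ| < γ}. Then for all θ ∈ D_γ and ξ ∈ ℝⁿ \ {0}: φ_θ(ξ)·φ_θ(ξ) = (|ξ| + θρ(|ξ|))², -π/4 < arg(φ_θ(ξ)·φ_θ(ξ)) < π/4, and |φ_θ(ξ)·φ_θ(ξ)| > (1 - tan(π/8))² |ξ|². -/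
open MeasureTheory Complex Real Filter Metric
open scoped Classical

noncomputable section

abbrev Rn (n : ℕ) := EuclideanSpace ℝ (Fin n)
abbrev L2 (n : ℕ) := MeasureTheory.Lp ℂ 2 (volume : Measure (Rn n))
abbrev Op (n : ℕ) := L2 n →L[ℂ] L2 n

/-- The Laplacian of a Schwartz test function. -/
def schwartzLap {n : ℕ} (φ : SchwartzMap (Rn n) ℂ) (x : Rn n) : ℂ :=
  ∑ i : Fin n, iteratedFDeriv ℝ 2 (⇑φ) x ![EuclideanSpace.single i 1, EuclideanSpace.single i 1]

/-- `(-Δ + W - z) u = f` in the sense of distributions, for `u, f ∈ L²`. -/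
def IsWeakSolution {n : ℕ} (W : Rn n → ℂ) (z : ℂ) (u f : L2 n) : Prop :=
  ∀ φ : SchwartzMap (Rn n) ℂ,
    ∫ x, u x * (-(schwartzLap φ x) + (W x - z) * φ x) = ∫ x, f x * φ x

/-- `T` is the (bounded, everywhere defined) resolvent `(-Δ + W - z)⁻¹` on `L²`. -/
def IsResolvent {n : ℕ} (W : Rn n → ℂ) (z : ℂ) (T : Op n) : Prop :=
  (∀ f, IsWeakSolution W z (T f) f) ∧ ∀ u f, IsWeakSolution W z u f → u = T f

/-- `T` is the operator of multiplication by the (bounded) function `g`. -/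
def IsMulOp {n : ℕ} (g : Rn n → ℂ) (T : Op n) : Prop :=
  ∀ u : L2 n, (⇑(T u) : Rn n → ℂ) =ᵐ[volume] fun x => g x * u x

/-- The sector `-π/8 < arg λ < 7π/8`. -/
def Sector : Set ℂ := {z : ℂ | -(π/8) < z.arg ∧ z.arg < 7*π/8}

/-- The rectangle `Ω = (a', a) + i(-γ', b)`. -/
def Rect (a' a γ' b : ℝ) : Set ℂ := {z : ℂ | z.re ∈ Set.Ioo a' a ∧ z.im ∈ Set.Ioo (-γ') b}

/-- `ψ(ξ) = ρ(|ξ|) ξ / |ξ|`. -/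
def psiR {n : ℕ} (ρ : ℝ → ℝ) (ξ : Rn n) : Rn n :=
  if ξ = 0 then 0 else (ρ ‖ξ‖ / ‖ξ‖) • ξ

/-- The deformation `φ_θ(ξ) = ξ + θ ψ(ξ)`, with values in `ℂⁿ`. -/
def phiTheta {n : ℕ} (ρ : ℝ → ℝ) (θ : ℂ) (ξ : Rn n) : Fin n → ℂ :=
  fun j => (ξ j : ℂ) + θ * (psiR ρ ξ j : ℂ)

/-- The bilinear (non-Hermitian) dot product on `ℂⁿ`. -/
def dotC {n : ℕ} (v w : Fin n → ℂ) : ℂ := ∑ j, v j * w j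

/-- The Jacobian matrix `Dψ(ξ) = (ρ(|ξ|)/|ξ|) I + (ρ'(|ξ|)/|ξ|² - ρ(|ξ|)/|ξ|³) ξξᵀ`. -/
def DpsiMat {n : ℕ} (ρ : ℝ → ℝ) (ξ : Rn n) : Matrix (Fin n) (Fin n) ℝ :=
  if ξ = 0 then 0 else
    (ρ ‖ξ‖ / ‖ξ‖) • (1 : Matrix (Fin n) (Fin n) ℝ)
      + (deriv ρ ‖ξ‖ / ‖ξ‖ ^ 2 - ρ ‖ξ‖ / ‖ξ‖ ^ 3) • Matrix.of fun i j => ξ i * ξ j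

/-- The Jacobian matrix `Dφ_θ(ξ) = I + θ Dψ(ξ)` (a complex symmetric matrix). -/
def DphiMat {n : ℕ} (ρ : ℝ → ℝ) (θ : ℂ) (ξ : Rn n) : Matrix (Fin n) (Fin n) ℂ :=
  1 + θ • (DpsiMat ρ ξ).map Complex.ofReal

/-- The quadratic form `(Dφ_θ(ξ)⁻² ξ*)·ξ*` with `Dφ_θ⁻² = (Dφ_θ⁻¹)ᵀ Dφ_θ⁻¹`. -/
def qForm {n : ℕ} (ρ : ℝ → ℝ) (θ : ℂ) (ξ ξs : Rn n) : ℂ :=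
  dotC ((((DphiMat ρ θ ξ)⁻¹).transpose * (DphiMat ρ θ ξ)⁻¹).mulVec fun j => (ξs j : ℂ))
    (fun j => (ξs j : ℂ))

/-- The region `D_γ = {θ ∈ ℂ : |Re θ| + |Im θ| < γ}`. -/
def Dgamma (γ : ℝ) : Set ℂ := {θ : ℂ | |θ.re| + |θ.im| < γ}

/-! With `r = |ξ|` one has `φ_θ(ξ) = (1 + θρ(r)/r) ξ`, so `φ_θ(ξ)·φ_θ(ξ) = w²` for
`w = r + θρ(r)`. The mean value theorem gives `0 ≤ γρ(r) < tan(π/8) r`, and together with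
`|Re θ| + |Im θ| < γ` this yields `Re w > (1 - tan(π/8)) r` and `|Im w| < tan(π/8) Re w`,
i.e. `|arg w| < π/8`. Hence `arg w² = 2 arg w ∈ (-π/4, π/4)` and
`|w²| ≥ (Re w)² > (1 - tan(π/8))² r²`. -/

theorem image_nonneg_of_deriv_nonneg {f : ℝ → ℝ} (hf : Differentiable ℝ f) (hf0 : f 0 = 0)
    (hf' : ∀ x > 0, 0 ≤ deriv f x) {r : ℝ} (hr : 0 ≤ r) : 0 ≤ f r := by
  have hmono := monotoneOn_of_deriv_nonneg (convex_Ici 0) hf.continuous.continuousOn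
    hf.differentiableOn (by rw [interior_Ici]; exact hf')
  simpa only [hf0] using hmono Set.self_mem_Ici hr hr

theorem image_lt_mul_of_deriv_lt {f : ℝ → ℝ} (hf : Differentiable ℝ f) (hf0 : f 0 = 0) {C : ℝ}
    (hf' : ∀ x > 0, deriv f x < C) {r : ℝ} (hr : 0 < r) : f r < C * r := by
  simpa only [hf0, sub_zero] using (convex_Ici 0).image_sub_lt_mul_sub_of_deriv_lt
    hf.continuous.continuousOn hf.differentiableOn (by rw [interior_Ici]; exact hf')
    0 Set.self_mem_Ici r hr.le hr

theorem Real.tan_pi_div_eight_pos : 0 < Real.tan (π / 8) :=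
  Real.tan_pos_of_pos_of_lt_pi_div_two (by positivity) (by linarith [pi_pos])

theorem Real.tan_pi_div_eight_lt_one : Real.tan (π / 8) < 1 := by
  rw [← Real.tan_pi_div_four]
  exact Real.tan_lt_tan_of_lt_of_lt_pi_div_two (by linarith [pi_pos]) (by linarith [pi_pos])
    (by linarith [pi_pos])

namespace Complex

theorem abs_arg_lt_of_abs_im_lt_tan_mul_re {z : ℂ} {α : ℝ} (hα : α ∈ Set.Ioo (-(π / 2)) (π / 2))
    (hre : 0 < z.re) (him : |z.im| < Real.tan α * z.re) : |arg z| < α := by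
  have hz : arg z ∈ Set.Ioo (-(π / 2)) (π / 2) :=
    abs_lt.1 (abs_arg_lt_pi_div_two_iff.2 (Or.inl hre))
  have htan : |Real.tan (arg z)| < Real.tan α := by
    rwa [tan_arg, abs_div, abs_of_pos hre, div_lt_iff₀ hre]
  have hneg : -α ∈ Set.Ioo (-(π / 2)) (π / 2) := ⟨neg_lt_neg hα.2, by linarith [hα.1]⟩
  obtain ⟨hlo, hhi⟩ := abs_lt.1 htan
  rw [← Real.tan_neg] at hlo
  exact abs_lt.2 ⟨Real.strictMonoOn_tan.lt_iff_lt hneg hz |>.1 hlo,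
    Real.strictMonoOn_tan.lt_iff_lt hz hα |>.1 hhi⟩

theorem arg_sq_of_mem_Ioc {w : ℂ} (hw : arg w ∈ Set.Ioc (-(π / 2)) (π / 2)) :
    arg (w ^ 2) = 2 * arg w := by
  rcases eq_or_ne w 0 with rfl | hw₀
  · simp
  rw [sq, arg_mul hw₀ hw₀ ⟨by linarith [hw.1], by linarith [hw.2]⟩, two_mul]

end Complex

theorem dotC_ofReal_self {n : ℕ} (ξ : Rn n) :
    dotC (fun j => (ξ j : ℂ)) (fun j => (ξ j : ℂ)) = (‖ξ‖ : ℂ) ^ 2 := by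
  have h : ((‖ξ‖ ^ 2 : ℝ) : ℂ) = ∑ j, ((ξ j : ℝ) : ℂ) ^ 2 := by
    rw [EuclideanSpace.real_norm_sq_eq]
    push_cast
    rfl
  simp only [dotC, ← sq]
  exact_mod_cast h.symm

theorem dotC_phiTheta_self {n : ℕ} (ρ : ℝ → ℝ) (θ : ℂ) {ξ : Rn n} (hξ : ξ ≠ 0) :
    dotC (phiTheta ρ θ ξ) (phiTheta ρ θ ξ) = ((‖ξ‖ : ℂ) + θ * ((ρ ‖ξ‖ : ℝ) : ℂ)) ^ 2 := by
  have hr : (‖ξ‖ : ℂ) ≠ 0 := by exact_mod_cast norm_ne_zero_iff.2 hξ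
  set c : ℂ := 1 + θ * (ρ ‖ξ‖ : ℂ) / ‖ξ‖
  have hphi : phiTheta ρ θ ξ = fun j => c * ξ j := by
    ext j
    simp only [phiTheta, psiR, if_neg hξ, PiLp.smul_apply, smul_eq_mul, c]
    push_cast
    ring
  calc dotC (phiTheta ρ θ ξ) (phiTheta ρ θ ξ)
      = c ^ 2 * dotC (fun j => (ξ j : ℂ)) (fun j => (ξ j : ℂ)) := by
        simp only [hphi, dotC, Finset.mul_sum]
        exact Finset.sum_congr rfl fun j _ => by ring
    _ = _ := by
        rw [dotC_ofReal_self]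
        simp only [c]
        field_simp

section Dgamma

variable {γ r s t : ℝ} {θ : ℂ}

theorem sub_mul_lt_re_of_mem_Dgamma (hθ : θ ∈ Dgamma γ) (hs : 0 ≤ s) (hγs : γ * s < t * r) :
    (1 - t) * r < ((r : ℂ) + θ * s).re := by
  have hθ' : |θ.re| + |θ.im| < γ := hθ
  have hθre : |θ.re| * s ≤ γ * s :=
    mul_le_mul_of_nonneg_right (by linarith [abs_nonneg θ.im]) hs
  simp only [add_re, ofReal_re, re_mul_ofReal]
  nlinarith [neg_abs_le θ.re]

theorem abs_im_lt_mul_re_of_mem_Dgamma (hθ : θ ∈ Dgamma γ) (hs : 0 ≤ s) (hγs : γ * s < t * r)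
    (ht₀ : 0 ≤ t) (ht₁ : t ≤ 1) :
    |((r : ℂ) + θ * s).im| < t * ((r : ℂ) + θ * s).re := by
  have hθγ : (|θ.re| + |θ.im|) * s ≤ γ * s := mul_le_mul_of_nonneg_right (le_of_lt hθ) hs
  have hre : -(t * (|θ.re| * s)) ≤ t * (θ.re * s) := by
    nlinarith [neg_abs_le θ.re, mul_nonneg ht₀ hs]
  have ht : t * (|θ.re| * s) ≤ |θ.re| * s := mul_le_of_le_one_left (by positivity) ht₁
  simp only [add_re, add_im, ofReal_re, ofReal_im, re_mul_ofReal, im_mul_ofReal, zero_add,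
    abs_mul, abs_of_nonneg hs]
  linarith

end Dgamma

theorem phi_theta_square_bounds_general
    (n : ℕ) (γ : ℝ)
    (ρ : ℝ → ℝ) (hρ : ContDiff ℝ (⊤ : ℕ∞) ρ) (hρ0 : ρ 0 = 0)
    (hρ' : ∀ t ≥ (0:ℝ), 0 ≤ deriv ρ t ∧ deriv ρ t < γ⁻¹ * Real.tan (π/8))
    (θ : ℂ) (hθ : θ ∈ Dgamma γ) (ξ : Rn n) (hξ : ξ ≠ 0) :
    dotC (phiTheta ρ θ ξ) (phiTheta ρ θ ξ) = ((‖ξ‖ : ℂ) + θ * ((ρ ‖ξ‖ : ℝ) : ℂ)) ^ 2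
      ∧ -(π/4) < (dotC (phiTheta ρ θ ξ) (phiTheta ρ θ ξ)).arg
      ∧ (dotC (phiTheta ρ θ ξ) (phiTheta ρ θ ξ)).arg < π/4
      ∧ (1 - Real.tan (π/8)) ^ 2 * ‖ξ‖ ^ 2
          < ‖dotC (phiTheta ρ θ ξ) (phiTheta ρ θ ξ)‖ := by
  set r := ‖ξ‖
  set t := Real.tan (π / 8)
  have hr : 0 < r := norm_pos_iff.2 hξ
  have hγ : 0 < γ := (add_nonneg (abs_nonneg _) (abs_nonneg _)).trans_lt hθ
  have hdiff : Differentiable ℝ ρ := hρ.differentiable (by simp)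
  have hρr : 0 ≤ ρ r :=
    image_nonneg_of_deriv_nonneg hdiff hρ0 (fun x hx => (hρ' x hx.le).1) hr.le
  have hγρr : γ * ρ r < t * r := by
    have := image_lt_mul_of_deriv_lt hdiff hρ0 (fun x hx => (hρ' x hx.le).2) hr
    calc γ * ρ r < γ * (γ⁻¹ * t * r) := mul_lt_mul_of_pos_left this hγ
      _ = t * r := by field_simp
  set w : ℂ := r + θ * (ρ r : ℂ)
  have hre : (1 - t) * r < w.re := sub_mul_lt_re_of_mem_Dgamma hθ hρr hγρr
  have hlo : 0 ≤ (1 - t) * r := mul_nonneg (sub_nonneg.2 Real.tan_pi_div_eight_lt_one.le) hr.le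
  have harg : |arg w| < π / 8 :=
    abs_arg_lt_of_abs_im_lt_tan_mul_re ⟨by linarith [pi_pos], by linarith [pi_pos]⟩
      (hlo.trans_lt hre)
      (abs_im_lt_mul_re_of_mem_Dgamma hθ hρr hγρr Real.tan_pi_div_eight_pos.le
        Real.tan_pi_div_eight_lt_one.le)
  obtain ⟨harg₁, harg₂⟩ := abs_lt.1 harg
  rw [dotC_phiTheta_self ρ θ hξ, arg_sq_of_mem_Ioc ⟨by linarith, by linarith⟩, norm_pow]
  refine ⟨rfl, by linarith, by linarith, ?_⟩
  calc (1 - t) ^ 2 * r ^ 2 = ((1 - t) * r) ^ 2 := by ring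
    _ < w.re ^ 2 := pow_lt_pow_left₀ hre hlo two_ne_zero
    _ ≤ ‖w‖ ^ 2 := pow_le_pow_left₀ (hlo.trans hre.le) (re_le_norm w) 2

/-- equations (3.14)–(3.15) of the paper.  For `θ ∈ D_γ` and
`ξ ∈ ℝⁿ \ {0}` one has `φ_θ(ξ)·φ_θ(ξ) = (|ξ| + θρ(|ξ|))²`,
`-π/4 < arg(φ_θ(ξ)·φ_θ(ξ)) < π/4`, and `|φ_θ(ξ)·φ_θ(ξ)| > (1 - tan(π/8))²|ξ|²`. -/
theorem phi_theta_square_bounds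
    (n : ℕ) (γ : ℝ) (hγ : 0 < γ)
    (ρ : ℝ → ℝ) (hρ : ContDiff ℝ (⊤ : ℕ∞) ρ) (hρ0 : ρ 0 = 0)
    (hρ' : ∀ t ≥ (0:ℝ), 0 ≤ deriv ρ t ∧ deriv ρ t < γ⁻¹ * Real.tan (π/8))
    (θ : ℂ) (hθ : θ ∈ Dgamma γ) (ξ : Rn n) (hξ : ξ ≠ 0) :
    dotC (phiTheta ρ θ ξ) (phiTheta ρ θ ξ) = ((‖ξ‖ : ℂ) + θ * ((ρ ‖ξ‖ : ℝ) : ℂ)) ^ 2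
      ∧ -(π/4) < (dotC (phiTheta ρ θ ξ) (phiTheta ρ θ ξ)).arg
      ∧ (dotC (phiTheta ρ θ ξ) (phiTheta ρ θ ξ)).arg < π/4
      ∧ (1 - Real.tan (π/8)) ^ 2 * ‖ξ‖ ^ 2
          < ‖dotC (phiTheta ρ θ ξ) (phiTheta ρ θ ξ)‖ :=
  phi_theta_square_bounds_general n γ ρ hρ hρ0 hρ' θ hθ ξ hξ
end
end

section
/- Let γ > 0 and ρ ∈ C^∞([0,∞);ℝ) with ρ ≡ 0 near 0, ρ ≡ 1 for large argument, and 0 ≤ ρ'(t) < γ^{-1} tan(π/8). Let β > 0 with βρ'(t) ≤ tan(π/8) for all t, and let Ω ⋐ {x+iy : x > 0, y > -βρ(x)} be a bounded set. Then there exists δ > 0 such that for all λ ∈ Ω and all ξ ∈ ℝⁿ, the argument of (|ξ| - iβρ(|ξ|))² - λ² satisfies arg((|ξ| - iβρ(|ξ|))² - λ²) ≤ π/2 - δ or ≥ 3π/4 + δ. -/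
/-!
Write `g = βρ`, `λ = a + ib` and `w = (t - i g(t))² - λ²`, so that `Re w = t² - g(t)² - a² + b²`
and `Im w = -2t g(t) - 2ab`. If `Im w ≤ 0`, then `arg w ≤ 0` or `arg w = π`. If `Im w > 0`, then
`b < 0` and, `g` being nondecreasing, `t ≤ a`. Since `0 ≤ g' ≤ c := tan(π/8)` and `c² + 2c = 1`,
the function `s² - 2s g(s) - g(s)²`, which is `Re + Im` of `(s - i g(s))²`, is nondecreasing;
comparing it at `t` and at `a` gives `Im w + 2aε ≤ -Re w`, where `ε > 0` is a lower bound of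
`b + g(a)` on the compact set `closure Ω`. With `Im w ≤ 2a g(a) ≤ 2acM` this yields
`Im w ≤ k (-Re w)` for `k = cM/(cM + ε) < 1`, that is `arg w ≥ π - arctan k = 3π/4 + δ` with
`δ = π/4 - arctan k`.
-/

open MeasureTheory Complex Real Filter Metric
open scoped Classical

noncomputable section

lemma Real.tan_pi_div_eight_sq_add_two_mul : Real.tan (π / 8) ^ 2 + 2 * Real.tan (π / 8) = 1 := by
  have hpos : 0 < Real.tan (π / 8) :=
    Real.tan_pos_of_pos_of_lt_pi_div_two (by positivity) (by linarith [Real.pi_pos])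
  have hlt : Real.tan (π / 8) < 1 := by
    rw [← Real.tan_pi_div_four]
    exact Real.tan_lt_tan_of_nonneg_of_lt_pi_div_two (by positivity)
      (by linarith [Real.pi_pos]) (by linarith [Real.pi_pos])
  have h := Real.tan_two_mul (x := π / 8)
  rw [show 2 * (π / 8) = π / 4 by ring, Real.tan_pi_div_four,
    eq_div_iff (by nlinarith)] at h
  linarith

lemma monotoneOn_Ici_of_hasDerivAt_nonneg {f f' : ℝ → ℝ} {a : ℝ}
    (hf : ∀ t, HasDerivAt f (f' t) t) (hf' : ∀ t ≥ a, 0 ≤ f' t) : MonotoneOn f (Set.Ici a) :=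
  monotoneOn_of_hasDerivWithinAt_nonneg (convex_Ici a)
    (fun t _ => (hf t).continuousAt.continuousWithinAt)
    (fun t _ => (hf t).hasDerivWithinAt)
    (fun t ht => hf' t (by rw [interior_Ici] at ht; exact le_of_lt ht))

lemma Complex.arg_eq_arctan_add_pi {w : ℂ} (hre : w.re < 0) (him : 0 ≤ w.im) :
    arg w = Real.arctan (w.im / w.re) + π := by
  have hgt : π / 2 < arg w := by
    by_contra! h
    rcases Complex.arg_le_pi_div_two_iff.mp h with h | h <;> linarith
  rw [← Complex.tan_arg, ← Real.tan_sub_pi, Real.arctan_tan (by linarith)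
    (by linarith [Complex.arg_le_pi w])]
  ring

lemma Complex.arg_nonpos_or_pi_sub_arctan_le {w : ℂ} {k : ℝ} (hk : 0 ≤ k)
    (h : 0 < w.im → w.re < 0 ∧ w.im ≤ k * -w.re) : arg w ≤ 0 ∨ π - Real.arctan k ≤ arg w := by
  rcases lt_trichotomy w.im 0 with him | him | him
  · exact Or.inl (Complex.arg_neg_iff.mpr him).le
  · rcases le_or_gt 0 w.re with hre | hre
    · exact Or.inl (Complex.arg_eq_zero_iff.mpr ⟨hre, him⟩).le
    · right
      rw [Complex.arg_eq_pi_iff.mpr ⟨hre, him⟩]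
      linarith [Real.arctan_nonneg.mpr hk]
  · obtain ⟨hre, hle⟩ := h him
    right
    rw [Complex.arg_eq_arctan_add_pi hre him.le]
    have : -k ≤ w.im / w.re := (le_div_iff_of_neg hre).mpr (by linarith)
    linarith [Real.arctan_strictMono.monotone this, Real.arctan_neg k]

lemma re_ofReal_sub_I_mul_sq_sub_sq (t s : ℝ) (z : ℂ) :
    (((t : ℂ) - I * s) ^ 2 - z ^ 2).re = t ^ 2 - s ^ 2 - (z.re ^ 2 - z.im ^ 2) := by
  simp only [pow_two, sub_re, mul_re, sub_im, mul_im, I_re, I_im, ofReal_re, ofReal_im]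
  ring

lemma im_ofReal_sub_I_mul_sq_sub_sq (t s : ℝ) (z : ℂ) :
    (((t : ℂ) - I * s) ^ 2 - z ^ 2).im = -2 * t * s - 2 * z.re * z.im := by
  simp only [pow_two, sub_re, mul_re, sub_im, mul_im, I_re, I_im, ofReal_re, ofReal_im]
  ring

section RadialProfile

variable {g : ℝ → ℝ} {c : ℝ}

lemma monotoneOn_Ici_zero_of_deriv_nonneg (hg : Differentiable ℝ g)
    (hg' : ∀ t ≥ 0, 0 ≤ deriv g t) : MonotoneOn g (Set.Ici 0) :=
  monotoneOn_Ici_of_hasDerivAt_nonneg (fun t => (hg t).hasDerivAt) hg'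

lemma nonneg_of_deriv_nonneg (hg : Differentiable ℝ g) (hg0 : g 0 = 0)
    (hg' : ∀ t ≥ 0, 0 ≤ deriv g t) {t : ℝ} (ht : 0 ≤ t) : 0 ≤ g t :=
  hg0 ▸ monotoneOn_Ici_zero_of_deriv_nonneg hg hg' Set.self_mem_Ici ht ht

lemma le_mul_of_deriv_le (hg : Differentiable ℝ g) (hg0 : g 0 = 0)
    (hgc : ∀ t ≥ 0, deriv g t ≤ c) {t : ℝ} (ht : 0 ≤ t) : g t ≤ c * t := by
  have hmono : MonotoneOn (fun s => c * s - g s) (Set.Ici 0) :=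
    monotoneOn_Ici_of_hasDerivAt_nonneg
      (fun s => ((hasDerivAt_id s).const_mul c).sub (hg s).hasDerivAt)
      (fun s hs => by simpa using hgc s hs)
  simpa [hg0] using hmono Set.self_mem_Ici ht ht

/-- The derivative is `2 (s (1 - g') - g (1 + g'))`, nonnegative because `g ≤ c s`, `g' ≤ c` and
`c² + 2c = 1`. -/
lemma monotoneOn_sq_sub_two_mul_sub_sq (hg : Differentiable ℝ g) (hg0 : g 0 = 0)
    (hg'0 : ∀ t ≥ 0, 0 ≤ deriv g t) (hgc : ∀ t ≥ 0, deriv g t ≤ c) (hc : c ^ 2 + 2 * c = 1) :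
    MonotoneOn (fun s => s ^ 2 - 2 * s * g s - g s ^ 2) (Set.Ici 0) := by
  refine monotoneOn_Ici_of_hasDerivAt_nonneg
    (f' := fun s => 2 * s - 2 * (g s + s * deriv g s) - 2 * g s * deriv g s) (fun s => ?_)
    (fun s hs => ?_)
  · have hgs := (hg s).hasDerivAt
    exact (((hasDerivAt_pow 2 s).sub (((hasDerivAt_id' s).const_mul 2).mul hgs)).sub
      (hgs.pow 2)).congr_deriv (by push_cast; ring)
  · have hle : g s ≤ c * s := le_mul_of_deriv_le hg hg0 hgc hs
    have hA : 0 ≤ (c * s - g s) * (1 + deriv g s) :=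
      mul_nonneg (by linarith) (by linarith [hg'0 s hs])
    have hB : 0 ≤ s * (1 + c) * (c - deriv g s) :=
      mul_nonneg (mul_nonneg hs (by linarith [hg'0 s hs, hgc s hs])) (by linarith [hgc s hs])
    nlinarith

lemma im_sq_sub_sq_add_le_neg_re (hg : Differentiable ℝ g) (hg0 : g 0 = 0)
    (hg'0 : ∀ t ≥ 0, 0 ≤ deriv g t) (hgc : ∀ t ≥ 0, deriv g t ≤ c) (hc : c ^ 2 + 2 * c = 1)
    {t : ℝ} {z : ℂ} (ht : 0 ≤ t) (hz : 0 < z.re) (hzg : 0 ≤ z.im + g z.re)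
    (him : 0 < (((t : ℂ) - I * g t) ^ 2 - z ^ 2).im) :
    (((t : ℂ) - I * g t) ^ 2 - z ^ 2).im + 2 * z.re * (z.im + g z.re) ≤
      -(((t : ℂ) - I * g t) ^ 2 - z ^ 2).re := by
  rw [im_ofReal_sub_I_mul_sq_sub_sq] at him ⊢
  rw [re_ofReal_sub_I_mul_sq_sub_sq]
  have hgt := nonneg_of_deriv_nonneg hg hg0 hg'0 ht
  have hgz := nonneg_of_deriv_nonneg hg hg0 hg'0 hz.le
  have hb : z.im < 0 := by nlinarith
  have hle : t ≤ z.re := by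
    by_contra! hlt
    have := monotoneOn_Ici_zero_of_deriv_nonneg hg hg'0 hz.le ht hlt.le
    nlinarith
  have hH := monotoneOn_sq_sub_two_mul_sub_sq hg hg0 hg'0 hgc hc ht hz.le hle
  simp only at hH
  nlinarith [mul_nonneg (by linarith : 0 ≤ z.im + g z.re) (by linarith : 0 ≤ g z.re - z.im)]

lemma im_sq_sub_sq_le (hg : Differentiable ℝ g) (hg0 : g 0 = 0)
    (hg'0 : ∀ t ≥ 0, 0 ≤ deriv g t) {t : ℝ} {z : ℂ} (ht : 0 ≤ t) (hz : 0 < z.re)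
    (hzg : 0 ≤ z.im + g z.re) :
    (((t : ℂ) - I * g t) ^ 2 - z ^ 2).im ≤ 2 * z.re * g z.re := by
  rw [im_ofReal_sub_I_mul_sq_sub_sq]
  nlinarith [nonneg_of_deriv_nonneg hg hg0 hg'0 ht]

lemma im_sq_sub_sq_le_mul_neg_re (hg : Differentiable ℝ g) (hg0 : g 0 = 0)
    (hg'0 : ∀ t ≥ 0, 0 ≤ deriv g t) (hgc : ∀ t ≥ 0, deriv g t ≤ c) (hc : c ^ 2 + 2 * c = 1)
    {t ε M : ℝ} {z : ℂ} (ht : 0 ≤ t) (hz : 0 < z.re) (hzM : z.re ≤ M) (hε : 0 < ε)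
    (hzε : ε ≤ z.im + g z.re) (him : 0 < (((t : ℂ) - I * g t) ^ 2 - z ^ 2).im) :
    (((t : ℂ) - I * g t) ^ 2 - z ^ 2).re < 0 ∧
      (((t : ℂ) - I * g t) ^ 2 - z ^ 2).im ≤
        c * M / (c * M + ε) * -(((t : ℂ) - I * g t) ^ 2 - z ^ 2).re := by
  set w := ((t : ℂ) - I * g t) ^ 2 - z ^ 2
  have hzg : 0 ≤ z.im + g z.re := hε.le.trans hzε
  have hre := im_sq_sub_sq_add_le_neg_re hg hg0 hg'0 hgc hc ht hz hzg him
  have hc0 : 0 ≤ c := (hg'0 0 le_rfl).trans (hgc 0 le_rfl)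
  have hcM : 0 ≤ c * M := mul_nonneg hc0 (hz.le.trans hzM)
  have him_le : w.im ≤ 2 * z.re * (c * M) := by
    have h1 := im_sq_sub_sq_le hg hg0 hg'0 ht hz hzg
    have h2 : g z.re ≤ c * M :=
      (le_mul_of_deriv_le hg hg0 hgc hz.le).trans (mul_le_mul_of_nonneg_left hzM hc0)
    nlinarith
  have hzε' : 2 * z.re * ε ≤ 2 * z.re * (z.im + g z.re) := by gcongr
  refine ⟨by nlinarith, ?_⟩
  rw [div_mul_eq_mul_div, le_div_iff₀ (by positivity)]
  nlinarith [mul_le_mul_of_nonneg_left hre hcM, mul_le_mul_of_nonneg_left him_le hε.le]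

end RadialProfile

theorem argument_claim_general
    (n : ℕ) (γ β : ℝ) (hβ : 0 < β)
    (ρ : ℝ → ℝ) (hρ : ContDiff ℝ (⊤ : ℕ∞) ρ)
    (hρ0 : ∃ t₀ > 0, ∀ t ≤ t₀, ρ t = 0)
    (hρ' : ∀ t ≥ (0:ℝ), 0 ≤ deriv ρ t ∧ deriv ρ t < γ⁻¹ * Real.tan (π/8))
    (hβρ' : ∀ t ≥ (0:ℝ), β * deriv ρ t ≤ Real.tan (π/8))
    (Ω : Set ℂ) (hΩbd : Bornology.IsBounded Ω)
    (hΩ : closure Ω ⊆ {z : ℂ | 0 < z.re ∧ -β * ρ z.re < z.im}) :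
    ∃ δ > 0, ∀ lam ∈ Ω, ∀ ξ : Rn n,
      ((((‖ξ‖ : ℂ) - Complex.I * β * ((ρ ‖ξ‖ : ℝ) : ℂ)) ^ 2 - lam ^ 2).arg ≤ π/2 - δ) ∨
      (3*π/4 + δ ≤ (((‖ξ‖ : ℂ) - Complex.I * β * ((ρ ‖ξ‖ : ℝ) : ℂ)) ^ 2 - lam ^ 2).arg) := by
  set g : ℝ → ℝ := fun x => β * ρ x
  have hρd : Differentiable ℝ ρ := hρ.differentiable (by simp)
  have hg : Differentiable ℝ g := hρd.const_mul β
  have hg0 : g 0 = 0 := by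
    obtain ⟨t₀, ht₀, hρt₀⟩ := hρ0
    simp [g, hρt₀ 0 ht₀.le]
  have hg' : ∀ t, deriv g t = β * deriv ρ t := fun t => deriv_const_mul β (hρd t)
  have hg'0 : ∀ t ≥ 0, 0 ≤ deriv g t := fun t ht => hg' t ▸ mul_nonneg hβ.le (hρ' t ht).1
  have hgc : ∀ t ≥ 0, deriv g t ≤ Real.tan (π / 8) := fun t ht => hg' t ▸ hβρ' t ht
  obtain ⟨M, hM0, hM⟩ := hΩbd.exists_pos_norm_le
  obtain ⟨ε, hε, hεΩ⟩ : ∃ ε > 0, ∀ z ∈ closure Ω, ε ≤ z.im + g z.re :=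
    hΩbd.isCompact_closure.exists_forall_le'
      (continuous_im.add (hg.continuous.comp continuous_re)).continuousOn
      fun z hz => show 0 < z.im + β * ρ z.re by linarith [(hΩ hz).2]
  set k := Real.tan (π / 8) * M / (Real.tan (π / 8) * M + ε)
  have hc0 : 0 ≤ Real.tan (π / 8) := (hg'0 0 le_rfl).trans (hgc 0 le_rfl)
  have hk0 : 0 ≤ k := by positivity
  have hk1 : k < 1 := (div_lt_one (by positivity)).mpr (by linarith)
  refine ⟨π / 4 - Real.arctan k, ?_, fun lam hlam ξ => ?_⟩
  · linarith [Real.arctan_strictMono hk1, Real.arctan_one]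
  have hsymbol : (‖ξ‖ : ℂ) - I * β * ((ρ ‖ξ‖ : ℝ) : ℂ) = (‖ξ‖ : ℂ) - I * (g ‖ξ‖ : ℝ) := by
    push_cast [g]
    ring
  rw [hsymbol]
  rcases Complex.arg_nonpos_or_pi_sub_arctan_le hk0
    (im_sq_sub_sq_le_mul_neg_re hg hg0 hg'0 hgc Real.tan_pi_div_eight_sq_add_two_mul
      (norm_nonneg ξ) (hΩ (subset_closure hlam)).1 ((re_le_norm lam).trans (hM lam hlam)) hε
      (hεΩ lam (subset_closure hlam))) with h | h
  · left
    linarith [Real.arctan_nonneg.mpr hk0, Real.pi_pos]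
  · right
    linarith

/-- equation (3.22), the "argument claim", of the paper.  Under the
stated conditions on `ρ`, `β` and the bounded set `Ω ⋐ {x+iy : x > 0, y > -βρ(x)}`,
there is `δ > 0` such that for all `λ ∈ Ω` and `ξ ∈ ℝⁿ` the argument of
`(|ξ| - iβρ(|ξ|))² - λ²` is `≤ π/2 - δ` or `≥ 3π/4 + δ`. -/
theorem argument_claim
    (n : ℕ) (γ β : ℝ) (hγ : 0 < γ) (hβ : 0 < β)
    (ρ : ℝ → ℝ) (hρ : ContDiff ℝ (⊤ : ℕ∞) ρ)
    (hρ0 : ∃ t₀ > 0, ∀ t ≤ t₀, ρ t = 0)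
    (hρ1 : ∃ t₁ : ℝ, ∀ t ≥ t₁, ρ t = 1)
    (hρ' : ∀ t ≥ (0:ℝ), 0 ≤ deriv ρ t ∧ deriv ρ t < γ⁻¹ * Real.tan (π/8))
    (hβρ' : ∀ t ≥ (0:ℝ), β * deriv ρ t ≤ Real.tan (π/8))
    (Ω : Set ℂ) (hΩbd : Bornology.IsBounded Ω)
    (hΩ : closure Ω ⊆ {z : ℂ | 0 < z.re ∧ -β * ρ z.re < z.im}) :
    ∃ δ > 0, ∀ lam ∈ Ω, ∀ ξ : Rn n,
      ((((‖ξ‖ : ℂ) - Complex.I * β * ((ρ ‖ξ‖ : ℝ) : ℂ)) ^ 2 - lam ^ 2).arg ≤ π/2 - δ) ∨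
      (3*π/4 + δ ≤ (((‖ξ‖ : ℂ) - Complex.I * β * ((ρ ‖ξ‖ : ℝ) : ℂ)) ^ 2 - lam ^ 2).arg) :=
  argument_claim_general n γ β hβ ρ hρ hρ0 hρ' hβρ' Ω hΩbd hΩ
end
end
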